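/- arXiv:2007.07219 — 5 statements merged into one kernel-verified Lean document; each statement's English description precedes it below -/
import Mathlib

section
/- If μ is a vector of n positive reals summing to n with minimum value μ_min, and q is a vector of nonnegative reals, then for any index i, λ·n·(1 + 2μ_max/α) + n + 2λn·q_i − 2∑_j [μ_j q_j + μ_max (q_i − q_j)⁺] ≤ λn(1 + 2μ_max/α) + n − 2·min(1−λ, μ_min)·∑_j q_j, where μ_max is the maximum of the μ_j, λ ∈ (0,1), and α > 0. -/
/-!
Since `μ j ≤ μmax`, the `j`-th summand is at least
`μ j * max (q i) (q j) = μ j * q i + μ j * (q j - q i)⁺ ≥ μ j * q i + m * (q j - q i)`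
for `m = min (1 - lam) μmin`. Summing with `∑ j, μ j = n` bounds the sum below by
`(1 - m) * n * q i + m * ∑ j, q j`, and `1 - m ≥ lam`.
-/

open Finset

lemma mul_max_le_mul_add_mul_max_sub {c M a b : ℝ} (hcM : c ≤ M) :
    c * max a b ≤ c * b + M * max (a - b) 0 := by
  rcases le_total a b with hab | hab
  · simp [max_eq_right hab, max_eq_right (sub_nonpos.2 hab)]
  · rw [max_eq_left hab, max_eq_left (sub_nonneg.2 hab)]
    nlinarith [mul_le_mul_of_nonneg_right hcM (sub_nonneg.2 hab)]

lemma mul_add_mul_sub_le_mul_max {w m x y : ℝ} (hm : 0 ≤ m) (hmw : m ≤ w) :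
    w * x + m * (y - x) ≤ w * max x y := by
  rcases le_total x y with hxy | hxy
  · rw [max_eq_right hxy]
    nlinarith [mul_le_mul_of_nonneg_right hmw (sub_nonneg.2 hxy)]
  · rw [max_eq_left hxy]
    nlinarith [mul_nonneg hm (sub_nonneg.2 hxy)]

lemma sum_mul_add_mul_sum_sub_le_sum_mul_max {ι : Type*} [Fintype ι] (w q : ι → ℝ)
    {m : ℝ} (x : ℝ) (hm : 0 ≤ m) (hmw : ∀ j, m ≤ w j) :
    (∑ j, w j) * x + m * ∑ j, (q j - x) ≤ ∑ j, w j * max x (q j) := by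
  rw [sum_mul, mul_sum, ← sum_add_distrib]
  exact sum_le_sum fun j _ => mul_add_mul_sub_le_mul_max hm (hmw j)

theorem drift_chain_bound_general (n : ℕ) (lam α : ℝ)
    (hlam : lam ∈ Set.Ioo (0 : ℝ) 1)
    (μ : Fin n → ℝ) (hμpos : ∀ j, 0 < μ j) (hμsum : ∑ j, μ j = n)
    (μmin μmax : ℝ)
    (hμmin : IsLeast (Set.range μ) μmin) (hμmax : IsGreatest (Set.range μ) μmax)
    (q : Fin n → ℝ) (hq : ∀ j, 0 ≤ q j) (i : Fin n) :
    lam * n * (1 + 2 * μmax / α) + n + 2 * lam * n * q i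
      - 2 * ∑ j, (μ j * q j + μmax * max (q i - q j) 0)
    ≤ lam * n * (1 + 2 * μmax / α) + n
      - 2 * min (1 - lam) μmin * ∑ j, q j := by
  set m := min (1 - lam) μmin
  have hm_le : m ≤ 1 - lam := min_le_left _ _
  have hmμ (j : Fin n) : m ≤ μ j := (min_le_right _ _).trans (hμmin.2 ⟨j, rfl⟩)
  have hm0 : 0 ≤ m := by
    obtain ⟨j, hj⟩ := hμmin.1
    exact le_min (by linarith [hlam.2]) (hj ▸ hμpos j).le
  have hnq : 0 ≤ (n : ℝ) * q i := mul_nonneg n.cast_nonneg (hq i)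
  have key : lam * n * q i + m * ∑ j, q j
      ≤ ∑ j, (μ j * q j + μmax * max (q i - q j) 0) :=
    calc lam * n * q i + m * ∑ j, q j
        ≤ n * q i + m * ∑ j, (q j - q i) := by
          rw [sum_sub_distrib, sum_const, card_univ, Fintype.card_fin, nsmul_eq_mul]
          nlinarith
      _ = (∑ j, μ j) * q i + m * ∑ j, (q j - q i) := by rw [hμsum]
      _ ≤ ∑ j, μ j * max (q i) (q j) :=
          sum_mul_add_mul_sum_sub_le_sum_mul_max μ q (q i) hm0 hmμ
      _ ≤ _ := sum_le_sum fun j _ => mul_max_le_mul_add_mul_max_sub (hμmax.2 ⟨j, rfl⟩)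
  linarith

theorem drift_chain_bound (n : ℕ) (hn : 1 ≤ n) (lam α : ℝ)
    (hlam : lam ∈ Set.Ioo (0 : ℝ) 1) (hα : 0 < α)
    (μ : Fin n → ℝ) (hμpos : ∀ j, 0 < μ j) (hμsum : ∑ j, μ j = n)
    (μmin μmax : ℝ)
    (hμmin : IsLeast (Set.range μ) μmin) (hμmax : IsGreatest (Set.range μ) μmax)
    (q : Fin n → ℝ) (hq : ∀ j, 0 ≤ q j) (i : Fin n) :
    lam * n * (1 + 2 * μmax / α) + n + 2 * lam * n * q i
      - 2 * ∑ j, (μ j * q j + μmax * max (q i - q j) 0)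
    ≤ lam * n * (1 + 2 * μmax / α) + n
      - 2 * min (1 - lam) μmin * ∑ j, q j :=
  drift_chain_bound_general n lam α hlam μ hμpos hμsum μmin μmax hμmin hμmax q hq i
end

section
/- Let p be a probability mass function on Finset (Fin n) such that for every fixed S with |S| ∈ o(n) and every j, j′ ∉ S, the conditional probability that j belongs to the sampled set given the event {the sampled set equals S ∪ {i} for some i ∉ S} is the same for j and j′. Then for any s and any two sets S, S′ of cardinality s (with s small), p(S) = p(S′) — i.e., conditional uniformity over elements outside S implies that all sets of equal cardinality are equally likely. -/
open Finset

namespace Finset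

variable {α : Type*} [DecidableEq α]

theorem insert_erase_sdiff_of_mem {T T' : Finset α} {j j' : α} (hj' : j' ∈ T') :
    insert j' (T.erase j) \ T' = (T \ T').erase j := by
  ext x
  simp only [mem_sdiff, mem_insert, mem_erase]
  constructor
  · rintro ⟨rfl | ⟨hxj, hxT⟩, hxT'⟩
    · exact absurd hj' hxT'
    · exact ⟨hxj, hxT, hxT'⟩
  · rintro ⟨hxj, hxT, hxT'⟩
    exact ⟨Or.inr ⟨hxj, hxT⟩, hxT'⟩

/-- Exchanging one element at a time connects any two sets of the same size, each exchange
shrinking `T \ T'` by one element. -/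
theorem apply_eq_of_forall_insert_eq {β : Type*} {f : Finset α → β} {s : ℕ}
    (h : ∀ S : Finset α, #S + 1 = s → ∀ j ∉ S, ∀ j' ∉ S, f (insert j S) = f (insert j' S))
    {T T' : Finset α} (hT : #T = s) (hT' : #T' = s) : f T = f T' := by
  induction hk : #(T \ T') generalizing T with
  | zero =>
    have hsub : T ⊆ T' := sdiff_eq_empty_iff_subset.1 (card_eq_zero.1 hk)
    rw [eq_of_subset_of_card_le hsub (by omega)]
  | succ k ih =>
    obtain ⟨j, hj⟩ : (T \ T').Nonempty := card_pos.1 (by omega)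
    obtain ⟨j', hj'⟩ : (T' \ T).Nonempty := by
      rw [← card_pos, ← card_sdiff_comm (hT.trans hT'.symm)]
      omega
    rw [mem_sdiff] at hj hj'
    have hjS : j ∉ T.erase j := notMem_erase j T
    have hj'S : j' ∉ T.erase j := fun h ↦ hj'.2 (mem_of_mem_erase h)
    have hS : #(T.erase j) + 1 = s := by rw [card_erase_add_one hj.1, hT]
    calc f T = f (insert j (T.erase j)) := by rw [insert_erase hj.1]
      _ = f (insert j' (T.erase j)) := h _ hS j hjS j' hj'S
      _ = f T' := by
        refine ih (by rw [card_insert_of_notMem hj'S, hS]) ?_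
        rw [insert_erase_sdiff_of_mem hj'.1, card_erase_of_mem (mem_sdiff.2 hj), hk,
          Nat.add_sub_cancel]

theorem apply_insert_eq_zero_of_not_pos {M : Type*} [AddCommMonoid M] [LinearOrder M]
    [IsOrderedAddMonoid M] [Fintype α] {p : Finset α → M} (hp : ∀ S, 0 ≤ p S)
    {s : ℕ} {S : Finset α} (hS : #S + 1 = s)
    (hsum : ¬ 0 < ∑ T ∈ univ.filter (fun T : Finset α => #T = s ∧ S ⊆ T), p T)
    {j : α} (hj : j ∉ S) : p (insert j S) = 0 := by
  have hmem : insert j S ∈ univ.filter (fun T : Finset α => #T = s ∧ S ⊆ T) := by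
    rw [mem_filter, card_insert_of_notMem hj, hS]
    exact ⟨mem_univ _, rfl, subset_insert j S⟩
  exact le_antisymm ((single_le_sum (fun T _ ↦ hp T) hmem).trans (not_lt.1 hsum)) (hp _)

end Finset

theorem equal_card_equal_prob_general (n s : ℕ)
    (p : Finset (Fin n) → ℝ) (hp : ∀ S, 0 ≤ p S)
    (hunif : ∀ S : Finset (Fin n), S.card = s - 1 →
      0 < ∑ T ∈ Finset.univ.filter (fun T : Finset (Fin n) => T.card = s ∧ S ⊆ T), p T →
      ∀ j ∉ S, ∀ j' ∉ S, p (insert j S) = p (insert j' S)) :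
    ∀ T T' : Finset (Fin n), T.card = s → T'.card = s → p T = p T' := by
  intro T T' hT hT'
  refine apply_eq_of_forall_insert_eq (fun S hS j hj j' hj' ↦ ?_) hT hT'
  by_cases hpos : 0 < ∑ T ∈ univ.filter (fun T : Finset (Fin n) => #T = s ∧ S ⊆ T), p T
  · exact hunif S (by omega) hpos j hj j' hj'
  · rw [apply_insert_eq_zero_of_not_pos hp hS hpos hj,
      apply_insert_eq_zero_of_not_pos hp hS hpos hj']

theorem equal_card_equal_prob (n s : ℕ) (hs : 1 ≤ s) (hsn : s ≤ n)
    (p : Finset (Fin n) → ℝ) (hp : ∀ S, 0 ≤ p S)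
    (hunif : ∀ S : Finset (Fin n), S.card = s - 1 →
      0 < ∑ T ∈ Finset.univ.filter (fun T : Finset (Fin n) => T.card = s ∧ S ⊆ T), p T →
      ∀ j ∉ S, ∀ j' ∉ S, p (insert j S) = p (insert j' S)) :
    ∀ T T' : Finset (Fin n), T.card = s → T'.card = s → p T = p T' :=
  equal_card_equal_prob_general n s p hp hunif
end

section
/- Let p be a probability mass function on Finset (Fin n) that is invariant under all permutations of Fin n. Then for s ≤ n, and any fixed subset N of Fin n, the conditional probability that the sampled set is contained in N, given that the sampled set has cardinality s, equals C(|N|, s)/C(n, s) (when s ≤ |N| and the conditioning event has positive probability). -/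
open Finset

section PermInvariant

variable {α β : Type*}

/-- Permutations act transitively on the subsets of a given size. -/
theorem eq_of_card_eq_of_perm_invariant [DecidableEq α] {f : Finset α → β}
    (hf : ∀ σ : Equiv.Perm α, ∀ S, f S = f (S.image σ)) {S T : Finset α}
    (h : S.card = T.card) : f S = f T := by
  obtain ⟨σ, hσ⟩ := Equiv.Perm.exists_map_finset_eq S T h
  rw [hf σ, ← hσ, map_eq_image]
  rfl

theorem sum_powersetCard_of_card_invariant [AddCommMonoid β] {f : Finset α → β}
    (hf : ∀ S T : Finset α, S.card = T.card → f S = f T) (A : Finset α)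
    {s : ℕ} {T : Finset α} (hT : T.card = s) :
    ∑ S ∈ A.powersetCard s, f S = A.card.choose s • f T := by
  rw [sum_congr rfl fun S hS => hf S T ((mem_powersetCard.mp hS).2.trans hT.symm),
    sum_const, card_powersetCard]

end PermInvariant

theorem conditional_containment_prob_general (n s : ℕ)
    (p : Finset (Fin n) → ℝ)
    (hinv : ∀ σ : Equiv.Perm (Fin n), ∀ S : Finset (Fin n), p S = p (S.image σ))
    (N : Finset (Fin n)) (hsN : s ≤ N.card)
    (hq : 0 < ∑ S ∈ Finset.univ.filter (fun S : Finset (Fin n) => S.card = s), p S) :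
    (∑ S ∈ Finset.univ.filter (fun S : Finset (Fin n) => S ⊆ N ∧ S.card = s), p S)
      / (∑ S ∈ Finset.univ.filter (fun S : Finset (Fin n) => S.card = s), p S)
    = (N.card.choose s : ℝ) / (n.choose s : ℝ) := by
  have hconst : ∀ S T : Finset (Fin n), S.card = T.card → p S = p T :=
    fun _ _ => eq_of_card_eq_of_perm_invariant hinv
  obtain ⟨S₀, -, hS₀⟩ := exists_subset_card_eq hsN
  have hN : ∑ S ∈ univ.filter (fun S => S ⊆ N ∧ S.card = s), p S = N.card.choose s * p S₀ := by
    rw [show univ.filter (fun S => S ⊆ N ∧ S.card = s) = N.powersetCard s by ext; simp,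
      sum_powersetCard_of_card_invariant hconst N hS₀, nsmul_eq_mul]
  have huniv : ∑ S ∈ univ.filter (fun S => S.card = s), p S = n.choose s * p S₀ := by
    rw [show univ.filter (fun S : Finset (Fin n) => S.card = s) = univ.powersetCard s by ext; simp,
      sum_powersetCard_of_card_invariant hconst univ hS₀, nsmul_eq_mul,
      card_univ, Fintype.card_fin]
  rw [huniv] at hq ⊢
  rw [hN, mul_div_mul_right _ _ (ne_of_gt (pos_of_mul_pos_right hq (Nat.cast_nonneg _)))]

theorem conditional_containment_prob (n s : ℕ) (hn : 1 ≤ n)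
    (p : Finset (Fin n) → ℝ) (hp : ∀ S, 0 ≤ p S)
    (hsum : ∑ S : Finset (Fin n), p S = 1)
    (hinv : ∀ σ : Equiv.Perm (Fin n), ∀ S : Finset (Fin n), p S = p (S.image σ))
    (N : Finset (Fin n)) (hsN : s ≤ N.card)
    (hq : 0 < ∑ S ∈ Finset.univ.filter (fun S : Finset (Fin n) => S.card = s), p S) :
    (∑ S ∈ Finset.univ.filter (fun S : Finset (Fin n) => S ⊆ N ∧ S.card = s), p S)
      / (∑ S ∈ Finset.univ.filter (fun S : Finset (Fin n) => S.card = s), p S)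
    = (N.card.choose s : ℝ) / (n.choose s : ℝ) :=
  conditional_containment_prob_general n s p hinv N hsN hq
end

section
/- In the setting of permutation-invariant sampling with sample sizes at most s* where 6·s* ≤ n, and where N is a set of ⌊n/2⌋ slow servers, the probability that the sampled set is contained in N, conditioned on the sample size being at most s*, is at least (1/3)^{s*}. -/
/-!
Permutation invariance makes `p S` a function of `#S` alone, so the probability that the sample
lies in `N` is the expectation of `C(#N, #S) / C(n, #S)`. For `6 s ≤ n` this ratio is at least
`(1/3)^s`, since `C(n, s) / C(⌊n/2⌋, s)` is the product of the factors `(n - k) / (⌊n/2⌋ - k)`,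
`k < s`, each at most `3`.
-/

open Finset

theorem Nat.choose_le_three_pow_mul_choose_half {n s : ℕ} (hs : 6 * s ≤ n) :
    n.choose s ≤ 3 ^ s * (n / 2).choose s := by
  induction s with
  | zero => simp
  | succ k ih =>
    refine Nat.le_of_mul_le_mul_right ?_ k.succ_pos
    calc n.choose (k + 1) * (k + 1) = n.choose k * (n - k) := Nat.choose_succ_right_eq n k
      _ ≤ 3 ^ k * (n / 2).choose k * (3 * (n / 2 - k)) :=
          Nat.mul_le_mul (ih (by omega)) (by omega)
      _ = 3 ^ (k + 1) * ((n / 2).choose k * (n / 2 - k)) := by ring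
      _ = 3 ^ (k + 1) * (n / 2).choose (k + 1) * (k + 1) := by
          rw [← Nat.choose_succ_right_eq, mul_assoc]

theorem one_third_pow_le_choose_half_div_choose {n s : ℕ} (hs : 6 * s ≤ n) :
    (1 / 3 : ℝ) ^ s ≤ (n / 2).choose s / n.choose s := by
  have hpos : (0 : ℝ) < n.choose s := mod_cast Nat.choose_pos (by omega)
  rw [le_div_iff₀ hpos, one_div, inv_pow, inv_mul_le_iff₀ (by positivity)]
  exact_mod_cast Nat.choose_le_three_pow_mul_choose_half hs

theorem Finset.factorsThrough_card_of_image_perm_invariant {α β : Type*} [DecidableEq α]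
    {p : Finset α → β} (hp : ∀ σ : Equiv.Perm α, ∀ S, p S = p (S.image σ)) :
    p.FactorsThrough card := by
  intro S T hST
  obtain ⟨σ, hσ⟩ := (Set.powersetCard.isPretransitive (n := #T)).exists_smul_eq
    (⟨S, hST⟩ : Set.powersetCard α #T) ⟨T, rfl⟩
  have hσT : S.image σ = T := by
    simpa [Set.powersetCard.coe_smul, smul_finset_def] using congrArg Subtype.val hσ
  rw [hp σ S, hσT]

theorem Finset.sum_powerset_eq_sum_choose_div_choose_mul {α K : Type*} [Fintype α]
    [DecidableEq α] [Field K] [CharZero K] {p : Finset α → K}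
    (hp : ∀ σ : Equiv.Perm α, ∀ S, p S = p (S.image σ)) (N : Finset α) :
    ∑ S ∈ N.powerset, p S =
      ∑ S, ((#N).choose #S / (Fintype.card α).choose #S : K) * p S := by
  set f : ℕ → K := Function.extend card p 0
  have hf (S : Finset α) : p S = f #S :=
    ((factorsThrough_card_of_image_perm_invariant hp).extend_apply 0 S).symm
  simp only [hf]
  rw [← powerset_univ, sum_powerset_apply_card,
    sum_powerset_apply_card fun m ↦ ((#N).choose m / (Fintype.card α).choose m : K) * f m,
    card_univ]
  have hcancel : ∀ m ∈ range (Fintype.card α + 1), (Fintype.card α).choose m •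
      (((#N).choose m / (Fintype.card α).choose m : K) * f m) = (#N).choose m • f m := by
    intro m hm
    have : ((Fintype.card α).choose m : K) ≠ 0 :=
      Nat.cast_ne_zero.mpr (Nat.choose_pos (Nat.lt_succ_iff.mp (mem_range.mp hm))).ne'
    rw [nsmul_eq_mul, nsmul_eq_mul, ← mul_assoc, mul_div_cancel₀ _ this]
  rw [sum_congr rfl hcancel]
  refine sum_subset (range_subset_range.mpr (by simpa using N.card_le_univ)) fun m _ hm ↦ ?_
  rw [Nat.choose_eq_zero_of_lt (by simpa using hm), zero_smul]

theorem slow_sampling_bound (n sstar : ℕ) (hn : 6 * sstar ≤ n)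
    (N : Finset (Fin n)) (hN : N.card = n / 2)
    (p : Finset (Fin n) → ℝ) (hp : ∀ S, 0 ≤ p S)
    (hsum : ∑ S : Finset (Fin n), p S = 1)
    (hsupp : ∀ S : Finset (Fin n), p S ≠ 0 → S.card ≤ sstar)
    (hinv : ∀ σ : Equiv.Perm (Fin n), ∀ S : Finset (Fin n), p S = p (S.image σ)) :
    ∑ S ∈ Finset.univ.filter (fun S : Finset (Fin n) => S ⊆ N), p S
      ≥ (1 / 3 : ℝ) ^ sstar := by
  have hratio (S : Finset (Fin n)) :
      (1 / 3 : ℝ) ^ sstar * p S ≤ ((n / 2).choose #S / n.choose #S : ℝ) * p S := by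
    by_cases hS : p S = 0
    · simp [hS]
    have hcard := hsupp S hS
    refine mul_le_mul_of_nonneg_right ?_ (hp S)
    exact (pow_le_pow_of_le_one (by norm_num) (by norm_num) hcard).trans
      (one_third_pow_le_choose_half_div_choose (by omega))
  calc (1 / 3 : ℝ) ^ sstar = ∑ S, (1 / 3 : ℝ) ^ sstar * p S := by rw [← mul_sum, hsum, mul_one]
    _ ≤ ∑ S, ((n / 2).choose #S / n.choose #S : ℝ) * p S := sum_le_sum fun S _ ↦ hratio S
    _ = _ := by
      rw [filter_subset_univ, sum_powerset_eq_sum_choose_div_choose_mul hinv, hN,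
        Fintype.card_fin]
end

section
/- Algebraic inequality used in the drift proof: for nonnegative reals q_1,…,q_n, positive reals μ_1,…,μ_n with ∑ μ_j = n and min μ_j = μ_min, and any index i and λ ∈ (0,1): 2λn q_i − 2∑_j μ_j max(q_i, q_j) ≤ −2 min(1−λ, μ_min)·∑_j q_j. -/
/-!
Write `max (q i) (q j) = q i + (q j - q i)⁺`. Since `∑ μ_j = n`, the weighted sum of maxima is
`n q_i + ∑ μ_j (q_j - q_i)⁺`, so the claim becomes
`min (1 - λ) μ_min · ∑ q_j ≤ (1 - λ) n q_i + ∑ μ_j (q_j - q_i)⁺`.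
This is summed from `q_j = min q_j q_i + (q_j - q_i)⁺`: the first part is at most `q_i` and is
paid for by `1 - λ`, the second by `μ_min ≤ μ_j`.
-/

open Finset

lemma sum_mul_max_eq_mul_add_sum_mul_posPart {ι : Type*} (s : Finset ι) (w x : ι → ℝ) (c : ℝ) :
    ∑ j ∈ s, w j * max c (x j) = (∑ j ∈ s, w j) * c + ∑ j ∈ s, w j * (x j - c)⁺ := by
  simp only [max_comm c, sup_eq_add_posPart_sub, mul_add, sum_add_distrib, sum_mul]

lemma min_mul_le_mul_add_mul_posPart {a b c d w : ℝ} (ha : 0 ≤ a) (hb : 0 ≤ b) (hc : 0 ≤ c)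
    (hdw : d ≤ w) : min c d * b ≤ c * a + w * (b - a)⁺ := by
  calc min c d * b = min c d * min b a + min c d * (b - a)⁺ := by
        rw [← mul_add, inf_eq_sub_posPart_sub b a, sub_add_cancel]
    _ ≤ c * a + w * (b - a)⁺ := by
        gcongr
        · exact min_le_left c d
        · exact min_le_right b a
        · exact (min_le_right c d).trans hdw

theorem drift_algebraic_bound_general (n : ℕ) (lam : ℝ)
    (hlam : lam ∈ Set.Ioo (0 : ℝ) 1)
    (μ : Fin n → ℝ) (hμsum : ∑ j, μ j = n)
    (μmin : ℝ) (hμmin : IsLeast (Set.range μ) μmin)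
    (q : Fin n → ℝ) (hq : ∀ j, 0 ≤ q j) (i : Fin n) :
    2 * lam * n * q i - 2 * ∑ j, μ j * max (q i) (q j)
      ≤ -2 * min (1 - lam) μmin * ∑ j, q j := by
  have key : min (1 - lam) μmin * ∑ j, q j
      ≤ (1 - lam) * (n * q i) + ∑ j, μ j * (q j - q i)⁺ :=
    calc min (1 - lam) μmin * ∑ j, q j
        = ∑ j, min (1 - lam) μmin * q j := mul_sum _ _ _
      _ ≤ ∑ j, ((1 - lam) * q i + μ j * (q j - q i)⁺) :=
        sum_le_sum fun j _ => min_mul_le_mul_add_mul_posPart (hq i) (hq j)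
          (sub_nonneg.2 hlam.2.le) (hμmin.2 ⟨j, rfl⟩)
      _ = (1 - lam) * (n * q i) + ∑ j, μ j * (q j - q i)⁺ := by
        simp only [sum_add_distrib, sum_const, card_univ, Fintype.card_fin, nsmul_eq_mul]
        ring
  rw [sum_mul_max_eq_mul_add_sum_mul_posPart, hμsum]
  linarith

theorem drift_algebraic_bound (n : ℕ) (hn : 1 ≤ n) (lam : ℝ)
    (hlam : lam ∈ Set.Ioo (0 : ℝ) 1)
    (μ : Fin n → ℝ) (hμpos : ∀ j, 0 < μ j) (hμsum : ∑ j, μ j = n)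
    (μmin : ℝ) (hμmin : IsLeast (Set.range μ) μmin)
    (q : Fin n → ℝ) (hq : ∀ j, 0 ≤ q j) (i : Fin n) :
    2 * lam * n * q i - 2 * ∑ j, μ j * max (q i) (q j)
      ≤ -2 * min (1 - lam) μmin * ∑ j, q j :=
  drift_algebraic_bound_general n lam hlam μ hμsum μmin hμmin q hq i
end
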